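/- arXiv:2011.01325 — 2 statements merged into one kernel-verified Lean document; each statement's English description precedes it below -/
import Mathlib

section
/- Under Assumption S*, let (x,α) ↦ w_α(x) be a Borel measurable function from 𝕏×[0,+∞) to [0,+∞] such that for each x ∈ 𝕏 the function α ↦ w_α(x) is nondecreasing and lower semi-continuous. Then for each x ∈ 𝕏 the function α ↦ w*_α(x) := inf_{a∈A(x)} η^α_{w_α}(x,a) is nondecreasing and lower semi-continuous on [0,+∞). -/
open MeasureTheory Set Filter Topology
open scoped NNReal ENNReal

/-- The optimality-operator integrand
`η^α_w(x,a) := c(x,a) + α ∫ w(z) q(dz|x,a)` of an MDP. -/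
noncomputable def eta {X A : Type*} [MeasurableSpace X] (c : X → A → ℝ≥0∞)
    (q : X → A → Measure X) (w : X → ℝ≥0∞) (α : ℝ≥0) (x : X) (a : A) : ℝ≥0∞ :=
  c x a + (α : ℝ≥0∞) * ∫⁻ z, w z ∂(q x a)

/-!
Monotonicity is immediate. For lower semicontinuity, `(α, a) ↦ η^α_{w_α}(x, a)` is jointly
lower semicontinuous on `[0, ∞) × A(x)`: it is nondecreasing and lower semicontinuous in `α`
(Fatou), and lower semicontinuous in `a` (the cost by inf-compactness, the integral as the
supremum of the integrals of the truncations `min w k`, which are continuous by setwise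
continuity of `q`). Since `η ≥ c` and `c(x, ·)` has compact sublevel sets, Berge's argument
shows that the infimum over `A(x)` is lower semicontinuous in `α`.
-/

section Semicontinuity

variable {T A : Type*} [TopologicalSpace T] [TopologicalSpace A]

theorem LowerSemicontinuous.ennreal_mul {f g : T → ℝ≥0∞} (hf : LowerSemicontinuous f)
    (hg : LowerSemicontinuous g) : LowerSemicontinuous fun t => f t * g t := by
  intro t y hy
  have hf0 : f t ≠ 0 := by rintro h; simp [h] at hy
  have hg0 : g t ≠ 0 := by rintro h; simp [h] at hy
  -- multiplication is continuous at `(f t, g t)` since neither factor vanishes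
  obtain ⟨⟨u, v⟩, ⟨hu, hv⟩, huv⟩ :
      ∃ p : ℝ≥0∞ × ℝ≥0∞, (p.1 < f t ∧ p.2 < g t) ∧ y < p.1 * p.2 := by
    have := nhdsLT_neBot_of_exists_lt ⟨0, pos_iff_ne_zero.2 hf0⟩
    have := nhdsLT_neBot_of_exists_lt ⟨0, pos_iff_ne_zero.2 hg0⟩
    have hnear := (ENNReal.tendsto_mul (Or.inl hf0) (Or.inl hg0)).eventually (lt_mem_nhds hy)
    rw [nhds_prod_eq] at hnear
    have hbelow : ∀ᶠ p in 𝓝[<] (f t) ×ˢ 𝓝[<] (g t), p.1 < f t ∧ p.2 < g t :=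
      eventually_mem_nhdsWithin.prod_mk eventually_mem_nhdsWithin
    exact (hbelow.and (Filter.prod_mono nhdsWithin_le_nhds nhdsWithin_le_nhds hnear)).exists
  filter_upwards [hf t u hu, hg t v hv] with s hs hs'
  exact huv.trans_le (mul_le_mul' hs.le hs'.le)

theorem lowerSemicontinuous_lintegral [FirstCountableTopology T] {X : Type*} [MeasurableSpace X]
    {μ : Measure X} {g : T → X → ℝ≥0∞} (hmeas : ∀ t, AEMeasurable (g t) μ)
    (hg : ∀ z, LowerSemicontinuous (g · z)) : LowerSemicontinuous fun t => ∫⁻ z, g t z ∂μ :=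
  lowerSemicontinuous_iff_le_liminf.2 fun t =>
    (lintegral_mono fun z => (hg z).le_liminf t).trans (lintegral_liminf_le' hmeas)

theorem lowerSemicontinuousOn_of_isCompact_sublevel {γ : Type*} [LinearOrder γ] [OrderTop γ]
    [T2Space A] {g : A → γ} {S : Set A} (hg : ∀ r < ⊤, IsCompact {a ∈ S | g a ≤ r}) :
    LowerSemicontinuousOn g S := by
  refine lowerSemicontinuousOn_iff_preimage_Iic.2 fun r => ?_
  rcases (le_top : r ≤ ⊤).lt_or_eq with hr | rfl
  · exact ⟨_, (hg r hr).isClosed, by ext a; simp +contextual⟩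
  · exact ⟨univ, isClosed_univ, by simp⟩

theorem lowerSemicontinuousOn_uncurry_of_monotone [LinearOrder T] [ClosedIicTopology T]
    {β : Type*} [Preorder β] {f : T → A → β} {S : Set A} (hmono : Monotone f)
    (hT : ∀ a ∈ S, LowerSemicontinuous (f · a)) (hA : ∀ t, LowerSemicontinuousOn (f t) S) :
    LowerSemicontinuousOn (Function.uncurry f) (univ ×ˢ S) := by
  rintro ⟨t₀, a₀⟩ ⟨-, ha₀⟩ y hy
  obtain ⟨t₁, hy₁, ht₁⟩ : ∃ t₁, y < f t₁ a₀ ∧ ∀ᶠ t in 𝓝 t₀, t₁ ≤ t := by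
    by_cases h : ∃ t₁ < t₀, y < f t₁ a₀
    · obtain ⟨t₁, hlt, hy₁⟩ := h
      exact ⟨t₁, hy₁, (eventually_gt_nhds hlt).mono fun _ => le_of_lt⟩
    · exact ⟨t₀, hy, (hT a₀ ha₀ t₀ y hy).mono fun t ht => not_lt.1 fun hlt => h ⟨t, hlt, ht⟩⟩
  rw [nhdsWithin_prod_eq, nhdsWithin_univ]
  filter_upwards [ht₁.prod_mk (hA t₁ a₀ ha₀ y hy₁)] with ⟨t, a⟩ ⟨ht, ha⟩
  exact ha.trans_le (hmono ht a)

theorem lowerSemicontinuous_biInf_of_isCompact_sublevel {β : Type*} [CompleteLinearOrder β]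
    [DenselyOrdered β] {f : T → A → β} {g : A → β} {S : Set A}
    (hf : LowerSemicontinuousOn (Function.uncurry f) (univ ×ˢ S))
    (hgf : ∀ t, ∀ a ∈ S, g a ≤ f t a) (hg : ∀ r < ⊤, IsCompact {a ∈ S | g a ≤ r}) :
    LowerSemicontinuous fun t => ⨅ a ∈ S, f t a := by
  intro t₀ y hy
  obtain ⟨r, hyr, hr⟩ := exists_between hy
  have hnear : ∀ᶠ t in 𝓝 t₀, ∀ a ∈ {a ∈ S | g a ≤ r}, a ∈ S → r < f t a := by
    refine (hg r (hr.trans_le le_top)).eventually_forall_of_forall_eventually fun a ha => ?_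
    have := hf (t₀, a) ⟨mem_univ _, ha.1⟩ r (hr.trans_le (biInf_le _ ha.1))
    rw [nhdsWithin, eventually_inf_principal] at this
    exact this.mono fun z hz hzS => hz ⟨mem_univ _, hzS⟩
  filter_upwards [hnear] with t ht
  refine hyr.trans_le (le_iInf₂ fun a ha => ?_)
  by_cases hga : g a ≤ r
  · exact (ht a ⟨ha, hga⟩ ha).le
  · exact ((not_le.1 hga).trans_le (hgf t a ha)).le

end Semicontinuity

section SetwiseContinuity

variable {A X : Type*} [TopologicalSpace A] [MeasurableSpace X] {ν : A → Measure X} {S : Set A}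

theorem continuousOn_lintegral_of_le (hν : ∀ a ∈ S, IsFiniteMeasure (ν a))
    (hcont : ∀ f : X → ℝ, Measurable f → (∃ C : ℝ, ∀ z, |f z| ≤ C) →
      ContinuousOn (fun a => ∫ z, f z ∂(ν a)) S)
    {g : X → ℝ≥0∞} (hg : Measurable g) {C : ℝ≥0} (hgC : ∀ z, g z ≤ C) :
    ContinuousOn (fun a => ∫⁻ z, g z ∂(ν a)) S := by
  have hbound : ∀ z, |(g z).toReal| ≤ C := fun z => by
    rw [abs_of_nonneg ENNReal.toReal_nonneg]
    exact ENNReal.toReal_le_coe_of_le_coe (hgC z)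
  have hreal : ∀ a ∈ S, ∫⁻ z, g z ∂(ν a) = ENNReal.ofReal (∫ z, (g z).toReal ∂(ν a)) := by
    intro a ha
    have := hν a ha
    rw [ofReal_integral_eq_lintegral_ofReal
      (Integrable.of_bound hg.ennreal_toReal.aestronglyMeasurable C
        (ae_of_all _ fun z => (Real.norm_eq_abs _).trans_le (hbound z)))
      (ae_of_all _ fun _ => ENNReal.toReal_nonneg)]
    exact lintegral_congr fun z =>
      (ENNReal.ofReal_toReal (ne_top_of_le_ne_top ENNReal.coe_ne_top (hgC z))).symm
  exact (ENNReal.continuous_ofReal.comp_continuousOn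
    (hcont _ hg.ennreal_toReal ⟨C, hbound⟩)).congr hreal

theorem lowerSemicontinuousOn_lintegral (hν : ∀ a ∈ S, IsFiniteMeasure (ν a))
    (hcont : ∀ f : X → ℝ, Measurable f → (∃ C : ℝ, ∀ z, |f z| ≤ C) →
      ContinuousOn (fun a => ∫ z, f z ∂(ν a)) S)
    {g : X → ℝ≥0∞} (hg : Measurable g) :
    LowerSemicontinuousOn (fun a => ∫⁻ z, g z ∂(ν a)) S := by
  have htrunc : ∀ a, ∫⁻ z, g z ∂(ν a) = ⨆ k : ℕ, ∫⁻ z, min (g z) k ∂(ν a) := fun a => by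
    rw [← lintegral_iSup (fun k => hg.min measurable_const)
      fun i j h z => min_le_min le_rfl (Nat.mono_cast h)]
    simp only [← inf_iSup_eq, ENNReal.iSup_natCast, inf_top_eq]
  simp only [htrunc]
  exact lowerSemicontinuousOn_iSup fun k => (continuousOn_lintegral_of_le hν hcont
    (hg.min measurable_const) (C := k) fun z => by simp).lowerSemicontinuousOn

end SetwiseContinuity

theorem monotone_eta {X A : Type*} [MeasurableSpace X] (c : X → A → ℝ≥0∞)
    (q : X → A → Measure X) {w : ℝ≥0 → X → ℝ≥0∞} (hw : Monotone w) (x : X) :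
    Monotone fun α a => eta c q (w α) α x a := fun _ _ h _ =>
  add_le_add le_rfl (mul_le_mul' (ENNReal.coe_le_coe.2 h) (lintegral_mono fun z => hw h z))

theorem lowerSemicontinuous_eta_discount {X A : Type*} [MeasurableSpace X] (c : X → A → ℝ≥0∞)
    (q : X → A → Measure X) {w : ℝ≥0 → X → ℝ≥0∞} (hw_meas : ∀ α, Measurable (w α))
    (hw_lsc : ∀ z, LowerSemicontinuous fun α => w α z) (x : X) (a : A) :
    LowerSemicontinuous fun α => eta c q (w α) α x a :=
  lowerSemicontinuous_const.add <| ENNReal.continuous_coe.lowerSemicontinuous.ennreal_mul <|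
    lowerSemicontinuous_lintegral (fun α => (hw_meas α).aemeasurable) hw_lsc

theorem lowerSemicontinuousOn_eta_action {X A : Type*} [MeasurableSpace X] [TopologicalSpace A]
    [T2Space A] {c : X → A → ℝ≥0∞} {q : X → A → Measure X} {Act : X → Set A} {x : X}
    (hc : ∀ r < ∞, IsCompact {a ∈ Act x | c x a ≤ r})
    (hq : ∀ a ∈ Act x, IsFiniteMeasure (q x a))
    (hcont : ∀ f : X → ℝ, Measurable f → (∃ C : ℝ, ∀ z, |f z| ≤ C) →
      ContinuousOn (fun a => ∫ z, f z ∂(q x a)) (Act x))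
    {w : X → ℝ≥0∞} (hw : Measurable w) (α : ℝ≥0) :
    LowerSemicontinuousOn (eta c q w α x) (Act x) :=
  (lowerSemicontinuousOn_of_isCompact_sublevel hc).add <|
    (ENNReal.continuous_const_mul ENNReal.coe_ne_top).comp_lowerSemicontinuousOn
      (lowerSemicontinuousOn_lintegral hq hcont hw) fun _ _ h => mul_le_mul_right h _

theorem stmt6_general {X A : Type*} [MeasurableSpace X] [MetricSpace A]
    -- the MDP: strict action map with Borel graph admitting a Borel selector,
    -- Borel one-step costs, regular transition probabilities
    (Act : X → Set A) (c : X → A → ℝ≥0∞) (q : X → A → Measure X)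
    (hqp : ∀ x, ∀ a ∈ Act x, IsProbabilityMeasure (q x a))
    -- Assumption S*(i): inf-compactness of the cost in the action
    (hS1 : ∀ x, ∀ r : ℝ, IsCompact {a ∈ Act x | c x a ≤ ENNReal.ofReal r})
    -- Assumption S*(ii): setwise continuity of the transition probability in the action
    (hS2 : ∀ x, ∀ f : X → ℝ, Measurable f → (∃ C : ℝ, ∀ z, |f z| ≤ C) →
      ContinuousOn (fun a => ∫ z, f z ∂(q x a)) (Act x))
    (w : ℝ≥0 → X → ℝ≥0∞)
    (hw_meas : Measurable fun p : X × ℝ≥0 => w p.2 p.1)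
    (hw_mono : ∀ x, Monotone fun α => w α x)
    (hw_lsc : ∀ x, LowerSemicontinuous fun α => w α x) :
    ∀ x, Monotone (fun α : ℝ≥0 => ⨅ a ∈ Act x, eta c q (w α) α x a) ∧
      LowerSemicontinuous (fun α : ℝ≥0 => ⨅ a ∈ Act x, eta c q (w α) α x a) := by
  intro x
  have hw : Monotone w := fun _ _ h z => hw_mono z h
  have hw_meas' : ∀ α, Measurable (w α) := fun α =>
    hw_meas.comp (measurable_id.prodMk measurable_const)
  have hc : ∀ r < ∞, IsCompact {a ∈ Act x | c x a ≤ r} := fun r hr => by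
    simpa [ENNReal.ofReal_toReal hr.ne] using hS1 x r.toReal
  have hq : ∀ a ∈ Act x, IsFiniteMeasure (q x a) := fun a ha => by
    have := hqp x a ha
    infer_instance
  refine ⟨fun _ _ h => iInf₂_mono fun a _ => monotone_eta c q hw x h a, ?_⟩
  refine lowerSemicontinuous_biInf_of_isCompact_sublevel ?_ (fun _ _ _ => le_self_add) hc
  exact lowerSemicontinuousOn_uncurry_of_monotone (monotone_eta c q hw x)
    (fun a _ => lowerSemicontinuous_eta_discount c q hw_meas' hw_lsc x a)
    fun α => lowerSemicontinuousOn_eta_action hc hq (hS2 x) (hw_meas' α) α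

/-- Lemma 3.2(iv): Under Assumption S*, for a Borel measurable
`(x,α) ↦ w_α(x)` from `𝕏×[0,∞)` to `[0,∞]`, nondecreasing and l.s.c. in `α`, for each
`x ∈ 𝕏` the function `α ↦ w*_α(x) := inf_{a ∈ Act x} η^α_{w_α}(x,a)` is nondecreasing and
lower semi-continuous on `[0,∞)`. -/
theorem stmt6 {X A : Type*}
    [MeasurableSpace X] [StandardBorelSpace X]
    [MetricSpace A] [MeasurableSpace A] [BorelSpace A] [StandardBorelSpace A]
    -- the MDP: strict action map with Borel graph admitting a Borel selector,
    -- Borel one-step costs, regular transition probabilities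
    (Act : X → Set A) (hstrict : ∀ x, (Act x).Nonempty)
    (hGr : MeasurableSet {p : X × A | p.2 ∈ Act p.1})
    (hsel : ∃ φ : X → A, Measurable φ ∧ ∀ x, φ x ∈ Act x)
    (c : X → A → ℝ≥0∞)
    (hc : Measurable ({p : X × A | p.2 ∈ Act p.1}.restrict fun p => c p.1 p.2))
    (q : X → A → Measure X)
    (hqp : ∀ x, ∀ a ∈ Act x, IsProbabilityMeasure (q x a))
    (hqm : ∀ B : Set X, MeasurableSet B →
      Measurable ({p : X × A | p.2 ∈ Act p.1}.restrict fun p => q p.1 p.2 B))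
    -- Assumption S*(i): inf-compactness of the cost in the action
    (hS1 : ∀ x, ∀ r : ℝ, IsCompact {a ∈ Act x | c x a ≤ ENNReal.ofReal r})
    -- Assumption S*(ii): setwise continuity of the transition probability in the action
    (hS2 : ∀ x, ∀ f : X → ℝ, Measurable f → (∃ C : ℝ, ∀ z, |f z| ≤ C) →
      ContinuousOn (fun a => ∫ z, f z ∂(q x a)) (Act x))
    (w : ℝ≥0 → X → ℝ≥0∞)
    (hw_meas : Measurable fun p : X × ℝ≥0 => w p.2 p.1)
    (hw_mono : ∀ x, Monotone fun α => w α x)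
    (hw_lsc : ∀ x, LowerSemicontinuous fun α => w α x) :
    ∀ x, Monotone (fun α : ℝ≥0 => ⨅ a ∈ Act x, eta c q (w α) α x a) ∧
      LowerSemicontinuous (fun α : ℝ≥0 => ⨅ a ∈ Act x, eta c q (w α) α x a) :=
  stmt6_general Act c q hqp hS1 hS2 w hw_meas hw_mono hw_lsc
end

section
/- Let α^(1) ∈ [1/2,1) be arbitrary and for n = 1,2,… set ε^(n) := ε_{α^(n)}, γ^(n) := γ_{α^(n),n}, N(n) := n*_{α^(n),n}, and α^(n+1) := δ_{α^(n),n}. Then for every n = 1,2,…, 1 − 1/2^n ≤ α^(n) < γ^(n) < α^(n+1) < 1; consequently α^(n) → 1 and γ^(n) → 1 as n → ∞. -/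
open Filter Topology

/-- `ε_β := 1 − β`. -/
noncomputable def epsP (β : ℝ) : ℝ := 1 - β

/-- `γ_{β,M} := max{(β+1)/2, 1 − ε_β/(3M)}`. -/
noncomputable def gammaP (β M : ℝ) : ℝ := max ((β + 1) / 2) (1 - epsP β / (3 * M))

/-- `n*_{β,M} := ⌊log_{γ_{β,M}}(min{1/2, M(1−γ_{β,M})/ε_β})⌋ + 1`. -/
noncomputable def nStar (β M : ℝ) : ℕ :=
  (⌊Real.logb (gammaP β M) (min (1 / 2) (M * (1 - gammaP β M) / epsP β))⌋).toNat + 1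

/-- `δ_{β,M} := max{(γ_{β,M}+1)/2, (1 − 1/(ε_β n*_{β,M}))^(1/n*_{β,M})}`. -/
noncomputable def deltaP (β M : ℝ) : ℝ :=
  max ((gammaP β M + 1) / 2)
    ((1 - 1 / (epsP β * (nStar β M : ℝ))) ^ ((1 : ℝ) / (nStar β M : ℝ)))

/-- `g_{β,M}(α) := ε_β (1 − α^{n*_{β,M}})² / (1 − α)`. -/
noncomputable def gFun (β M α : ℝ) : ℝ := epsP β * (1 - α ^ nStar β M) ^ 2 / (1 - α)

/-- The sequence `α^(1), α^(2), …` of the example: `α^(n+1) := δ_{α^(n), n}`; here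
`alphaSeq a1 n = α^(n+1)`, i.e. indices are shifted by one. -/
noncomputable def alphaSeq (a1 : ℝ) : ℕ → ℝ
  | 0 => a1
  | n + 1 => deltaP (alphaSeq a1 n) ((n : ℝ) + 1)

/- For `β ∈ [1/2, 1)` one has `1 − γ_{β,M} ≤ ε_β/2` and `γ_{β,M} ≥ 3/4`, hence
`−log γ_{β,M} ≤ (1 − γ)/γ ≤ 2ε_β/3 < ε_β log 2`. So `log_γ m > 1/ε_β` for `m ≤ 1/2`, which forces
`ε_β n*_{β,M} > 1`: the base `1 − 1/(ε_β n*)` of the root in `δ_{β,M}` lies in `[0, 1)`, and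
`γ_{β,M} < δ_{β,M} < 1`. Since `δ_{β,M} ≥ (γ_{β,M} + 1)/2 ≥ (β + 3)/4`, the distance
`1 − α^(n)` is at least quartered at each step, which gives the lower bound `1 − 1/2^n`. -/

section Parameters

variable {β M : ℝ}

lemma lt_gammaP (hβ1 : β < 1) : β < gammaP β M :=
  lt_of_lt_of_le (by linarith) (le_max_left _ _)

lemma gammaP_lt_one (hβ1 : β < 1) (hM : 0 < M) : gammaP β M < 1 := by
  have : 0 < epsP β / (3 * M) := div_pos (by simp [epsP, hβ1]) (by positivity)
  exact max_lt (by linarith) (by linarith)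

lemma neg_log_gammaP_le (hβ : 1 / 2 ≤ β) (hβ1 : β < 1) :
    -Real.log (gammaP β M) ≤ 2 * epsP β / 3 := by
  have hγ : (β + 1) / 2 ≤ gammaP β M := le_max_left _ _
  have hγ0 : 0 < gammaP β M := by linarith
  calc -Real.log (gammaP β M) = Real.log (gammaP β M)⁻¹ := (Real.log_inv _).symm
    _ ≤ (gammaP β M)⁻¹ - 1 := Real.log_le_sub_one_of_pos (inv_pos.2 hγ0)
    _ = (1 - gammaP β M) / gammaP β M := by field_simp
    _ ≤ ((1 - β) / 2) / (3 / 4) := by gcongr <;> linarith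
    _ = 2 * epsP β / 3 := by rw [epsP]; ring

lemma one_div_epsP_lt_nStar (hβ : 1 / 2 ≤ β) (hβ1 : β < 1) (hM : 0 < M) :
    1 / epsP β < nStar β M := by
  set γ := gammaP β M
  set m := min (1 / 2) (M * (1 - γ) / epsP β)
  have hε : 0 < epsP β := by simp [epsP, hβ1]
  have hγ1 : γ < 1 := gammaP_lt_one hβ1 hM
  have hlogγ : Real.log γ < 0 := Real.log_neg (by linarith [lt_gammaP (M := M) hβ1]) hγ1
  have hm : 0 < m := lt_min (by norm_num) (by have := sub_pos.2 hγ1; positivity)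
  have hlogm : Real.log m < -(2 / 3) :=
    calc Real.log m ≤ Real.log (1 / 2) := Real.log_le_log hm (min_le_left _ _)
      _ = -Real.log 2 := by rw [one_div, Real.log_inv]
      _ < -(2 / 3) := by linarith [Real.log_two_gt_d9]
  have hlogb : 1 / epsP β < Real.logb γ m := by
    rw [Real.logb, lt_div_iff_of_neg hlogγ, div_mul_eq_mul_div, one_mul, lt_div_iff₀ hε]
    nlinarith [neg_log_gammaP_le (M := M) hβ hβ1]
  calc 1 / epsP β < Real.logb γ m := hlogb
    _ < ⌊Real.logb γ m⌋₊ + 1 := Nat.lt_floor_add_one _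
    _ = nStar β M := by simp [nStar, γ, m, Int.floor_toNat]

lemma gammaP_lt_deltaP (hβ1 : β < 1) (hM : 0 < M) : gammaP β M < deltaP β M :=
  lt_of_lt_of_le (by linarith [gammaP_lt_one hβ1 hM]) (le_max_left _ _)

lemma deltaP_lt_one (hβ : 1 / 2 ≤ β) (hβ1 : β < 1) (hM : 0 < M) : deltaP β M < 1 := by
  have hN := one_div_epsP_lt_nStar hβ hβ1 hM
  have hε : 0 < epsP β := by simp [epsP, hβ1]
  have hεN : 1 < epsP β * nStar β M := by rwa [div_lt_iff₀' hε] at hN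
  have hbase : 1 / (epsP β * nStar β M) < 1 := (div_lt_one (by linarith)).2 hεN
  have hroot : (1 - 1 / (epsP β * (nStar β M : ℝ))) ^ ((1 : ℝ) / (nStar β M : ℝ)) < 1 :=
    Real.rpow_lt_one (by linarith) (sub_lt_self _ (one_div_pos.2 (by linarith)))
      (one_div_pos.2 (Nat.cast_pos.2 (Nat.succ_pos _)))
  exact max_lt (by linarith [gammaP_lt_one hβ1 hM]) hroot

lemma one_sub_deltaP_le : 1 - deltaP β M ≤ (1 - β) / 4 := by
  have hγ : (β + 1) / 2 ≤ gammaP β M := le_max_left _ _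
  have hδ : (gammaP β M + 1) / 2 ≤ deltaP β M := le_max_left _ _
  linarith

end Parameters

lemma alphaSeq_mem_Ico {a1 : ℝ} (ha1 : a1 ∈ Set.Ico (1 / 2 : ℝ) 1) (n : ℕ) :
    alphaSeq a1 n ∈ Set.Ico (1 - 1 / 2 ^ (n + 1)) 1 := by
  induction n with
  | zero => exact ⟨by norm_num [alphaSeq]; exact ha1.1, ha1.2⟩
  | succ n ih =>
    have hhalf : 1 / 2 ≤ alphaSeq a1 n := by
      have : (1 : ℝ) / 2 ^ (n + 1) ≤ 1 / 2 := by
        gcongr; exact le_self_pow₀ (by norm_num) (by omega)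
      linarith [ih.1]
    have hdist := one_sub_deltaP_le (β := alphaSeq a1 n) (M := (n : ℝ) + 1)
    refine ⟨?_, deltaP_lt_one hhalf ih.2 (by positivity)⟩
    show _ ≤ deltaP _ _
    rw [pow_succ, ← div_div]
    linarith [ih.1, ih.2]

/-- with `α^(1) ∈ [1/2,1)` arbitrary, `ε^(n) := ε_{α^(n)}`,
`γ^(n) := γ_{α^(n),n}`, `N(n) := n*_{α^(n),n}`, `α^(n+1) := δ_{α^(n),n}`, one has
`1 − 1/2^n ≤ α^(n) < γ^(n) < α^(n+1) < 1` for every `n ≥ 1`; consequently `α^(n) → 1`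
and `γ^(n) → 1` as `n → ∞`.  (Here `alphaSeq a1 n = α^(n+1)`.) -/
theorem stmt17 (a1 : ℝ) (ha1 : a1 ∈ Set.Ico (1 / 2 : ℝ) 1) :
    (∀ n : ℕ,
      1 - 1 / 2 ^ (n + 1) ≤ alphaSeq a1 n ∧
      alphaSeq a1 n < gammaP (alphaSeq a1 n) ((n : ℝ) + 1) ∧
      gammaP (alphaSeq a1 n) ((n : ℝ) + 1) < alphaSeq a1 (n + 1) ∧
      alphaSeq a1 (n + 1) < 1) ∧
    Tendsto (alphaSeq a1) atTop (𝓝 1) ∧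
    Tendsto (fun n : ℕ => gammaP (alphaSeq a1 n) ((n : ℝ) + 1)) atTop (𝓝 1) := by
  have hα := alphaSeq_mem_Ico ha1
  have hγ (n : ℕ) := gammaP_lt_deltaP (M := (n : ℝ) + 1) (hα n).2 (by positivity)
  have hlow : Tendsto (fun n : ℕ => 1 - 1 / (2 : ℝ) ^ (n + 1)) atTop (𝓝 1) := by
    have h := (tendsto_pow_atTop_nhds_zero_of_lt_one (r := (1 / 2 : ℝ)) (by norm_num)
      (by norm_num)).comp (tendsto_add_atTop_nat 1)
    simpa [Function.comp_def, one_div, inv_pow] using tendsto_const_nhds.sub h (a := (1 : ℝ))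
  refine ⟨fun n => ⟨(hα n).1, lt_gammaP (hα n).2, hγ n, (hα (n + 1)).2⟩, ?_, ?_⟩
  · exact tendsto_of_tendsto_of_tendsto_of_le_of_le hlow tendsto_const_nhds
      (fun n => (hα n).1) (fun n => (hα n).2.le)
  · exact tendsto_of_tendsto_of_tendsto_of_le_of_le hlow tendsto_const_nhds
      (fun n => ((hα n).1.trans (lt_gammaP (hα n).2).le))
      (fun n => ((hγ n).trans (hα (n + 1)).2).le)
end
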